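/- Let 0 < γ ≤ 4, 0 ≤ β ≤ 1, δ = (√γ/4)(√(12-3γ) - √γ). Then for every u ∈ H¹(ℝ) and every x ∈ ℝ: ((p - β p') * ((3-γ)/2 · u² + (γ/2) u'²))(x) ≥ δ u(x)², where p(x) = (1/2)e^{-|x|}. -/

import Mathlib

/-
On `y < x` the kernel is `(1 + β)/2 · e^{y-x}` and `e^{y-x}(u² + 2uu')` is the derivative of
`e^{y-x} u²`; on `y > x` it is `(1 - β)/2 · e^{x-y}` and `e^{x-y}(u² - 2uu')` is the derivative of
`-e^{x-y} u²`. Hence integrating the kernel against `u² + 2 sign(x - y) u u'` returns exactly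
`u(x)²`. Since `δ² = ((3 - γ)/2 - δ) γ/2`, the form `δ (U² + 2εUV)` is dominated by
`(3 - γ)/2 U² + γ/2 V²` whenever `|ε| ≤ 1`, and the kernel is nonnegative, so integrating this
pointwise bound gives the claim.
-/

open MeasureTheory Real

noncomputable def p (x : ℝ) : ℝ := (1/2) * Real.exp (-|x|)

noncomputable def p' (x : ℝ) : ℝ := -(Real.sign x) * (1/2) * Real.exp (-|x|)

open Set Filter

lemma Real.measurable_sign : Measurable Real.sign :=
  Measurable.ite measurableSet_Iio measurable_const
    (Measurable.ite measurableSet_Ioi measurable_const measurable_const)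

lemma Real.abs_sign_le_one (r : ℝ) : |Real.sign r| ≤ 1 := by
  rcases Real.sign_apply_eq r with h | h | h <;> simp [h]

lemma p'_eq_neg_sign_mul_p (z : ℝ) : p' z = -Real.sign z * p z := by
  rw [p', p, mul_assoc]

lemma continuous_p : Continuous p := by
  unfold p; fun_prop

lemma measurable_p' : Measurable p' := by
  simp_rw [funext p'_eq_neg_sign_mul_p]
  exact Real.measurable_sign.neg.mul continuous_p.measurable

lemma abs_p_le (z : ℝ) : |p z| ≤ 1 / 2 := by
  rw [p, abs_of_pos (by positivity)]
  have := exp_le_one_iff.2 (neg_nonpos.2 (abs_nonneg z))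
  linarith

lemma abs_p'_le (z : ℝ) : |p' z| ≤ 1 / 2 := by
  rw [p'_eq_neg_sign_mul_p, abs_mul, abs_neg]
  exact (mul_le_of_le_one_left (abs_nonneg _) (Real.abs_sign_le_one z)).trans (abs_p_le z)

lemma p_sub_mul_p'_of_pos (β : ℝ) {z : ℝ} (hz : 0 < z) :
    p z - β * p' z = (1 + β) / 2 * exp (-z) := by
  rw [p', p, Real.sign_of_pos hz, abs_of_pos hz]; ring

lemma p_sub_mul_p'_of_neg (β : ℝ) {z : ℝ} (hz : z < 0) :
    p z - β * p' z = (1 - β) / 2 * exp z := by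
  rw [p', p, Real.sign_of_neg hz, abs_of_neg hz, neg_neg]; ring

lemma p_sub_mul_p'_nonneg {β : ℝ} (hβ : |β| ≤ 1) (z : ℝ) : 0 ≤ p z - β * p' z := by
  obtain ⟨hβ₁, hβ₂⟩ := abs_le.1 hβ
  rcases lt_trichotomy z 0 with hz | rfl | hz
  · rw [p_sub_mul_p'_of_neg β hz]; exact mul_nonneg (by linarith) (exp_pos z).le
  · simp [p, p', Real.sign_zero]
  · rw [p_sub_mul_p'_of_pos β hz]; exact mul_nonneg (by linarith) (exp_pos _).le

lemma integrable_p_sub_mul_p'_mul {F : ℝ → ℝ} (hF : Integrable F) (β x : ℝ) :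
    Integrable fun y => (p (x - y) - β * p' (x - y)) * F y := by
  have hsub : Measurable fun y : ℝ => x - y := measurable_const.sub measurable_id
  refine hF.bdd_mul (c := 1 / 2 + |β| * (1 / 2)) ?_ (ae_of_all _ fun y => ?_)
  · exact ((continuous_p.measurable.comp hsub).sub
      (measurable_const.mul (measurable_p'.comp hsub))).aestronglyMeasurable
  · rw [Real.norm_eq_abs]
    refine (abs_sub _ _).trans (add_le_add (abs_p_le _) ?_)
    rw [abs_mul]
    exact mul_le_mul_of_nonneg_left (abs_p'_le _) (abs_nonneg β)

lemma integrable_sign_sub_mul {h : ℝ → ℝ} (hh : Integrable h) (x : ℝ) :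
    Integrable fun y => Real.sign (x - y) * h y :=
  hh.bdd_mul (c := 1)
    (Real.measurable_sign.comp (measurable_const.sub measurable_id)).aestronglyMeasurable
    (ae_of_all _ fun _ => Real.abs_sign_le_one _)

lemma integrableOn_Iic_exp_sub_mul {h : ℝ → ℝ} (hh : Integrable h) (x : ℝ) :
    IntegrableOn (fun y => exp (y - x) * h y) (Iic x) := by
  refine hh.integrableOn.bdd_mul (c := 1) (by fun_prop) ?_
  filter_upwards [self_mem_ae_restrict measurableSet_Iic] with y hy
  rw [Real.norm_eq_abs, abs_exp, exp_le_one_iff]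
  linarith [hy.out]

lemma integrableOn_Ioi_exp_sub_mul {h : ℝ → ℝ} (hh : Integrable h) (x : ℝ) :
    IntegrableOn (fun y => exp (x - y) * h y) (Ioi x) := by
  refine hh.integrableOn.bdd_mul (c := 1) (by fun_prop) ?_
  filter_upwards [self_mem_ae_restrict measurableSet_Ioi] with y hy
  rw [Real.norm_eq_abs, abs_exp, exp_le_one_iff]
  linarith [hy.out]

section HalfLine

variable {g g' : ℝ → ℝ} (hg : ∀ y, HasDerivAt g (g' y) y) (hgi : Integrable g)
  (hg'i : Integrable g')
include hg hgi hg'i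

lemma integral_Iic_exp_sub_mul_add (x : ℝ) :
    ∫ y in Iic x, exp (y - x) * (g y + g' y) = g x := by
  have hderiv : ∀ y, HasDerivAt (fun y => exp (y - x) * g y) (exp (y - x) * (g y + g' y)) y :=
    fun y => (((hasDerivAt_id' y).sub_const x).exp.fun_mul (hg y)).congr_deriv (by ring)
  have hint := integrableOn_Iic_exp_sub_mul (hgi.add hg'i) x
  have hlim := tendsto_zero_of_hasDerivAt_of_integrableOn_Iic (fun y _ => hderiv y) hint
    (integrableOn_Iic_exp_sub_mul hgi x)
  rw [integral_Iic_of_hasDerivAt_of_tendsto' (fun y _ => hderiv y) hint hlim]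
  simp

lemma integral_Ioi_exp_sub_mul_sub (x : ℝ) :
    ∫ y in Ioi x, exp (x - y) * (g y - g' y) = g x := by
  have hderiv : ∀ y, HasDerivAt (fun y => -(exp (x - y) * g y)) (exp (x - y) * (g y - g' y)) y :=
    fun y => (((hasDerivAt_id' y).const_sub x).exp.fun_mul (hg y)).neg.congr_deriv (by ring)
  have hint := integrableOn_Ioi_exp_sub_mul (hgi.sub hg'i) x
  have hlim := tendsto_zero_of_hasDerivAt_of_integrableOn_Ioi (fun y _ => hderiv y) hint
    (integrableOn_Ioi_exp_sub_mul hgi x).neg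
  rw [integral_Ioi_of_hasDerivAt_of_tendsto' (fun y _ => hderiv y) hint hlim]
  simp

end HalfLine

lemma integral_p_sub_mul_p'_mul_add_sign_mul {g g' : ℝ → ℝ}
    (hg : ∀ y, HasDerivAt g (g' y) y) (hgi : Integrable g) (hg'i : Integrable g') (β x : ℝ) :
    ∫ y, (p (x - y) - β * p' (x - y)) * (g y + Real.sign (x - y) * g' y) = g x := by
  have hint : Integrable fun y =>
      (p (x - y) - β * p' (x - y)) * (g y + Real.sign (x - y) * g' y) :=
    integrable_p_sub_mul_p'_mul (hgi.add (integrable_sign_sub_mul hg'i x)) β x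
  have hleft : EqOn (fun y => (p (x - y) - β * p' (x - y)) * (g y + Real.sign (x - y) * g' y))
      (fun y => (1 + β) / 2 * (exp (y - x) * (g y + g' y))) (Iio x) := fun y hy => by
    have hxy : 0 < x - y := sub_pos.2 hy
    dsimp only
    rw [p_sub_mul_p'_of_pos β hxy, Real.sign_of_pos hxy, neg_sub]
    ring
  have hright : EqOn (fun y => (p (x - y) - β * p' (x - y)) * (g y + Real.sign (x - y) * g' y))
      (fun y => (1 - β) / 2 * (exp (x - y) * (g y - g' y))) (Ioi x) := fun y hy => by
    have hxy : x - y < 0 := sub_neg.2 hy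
    dsimp only
    rw [p_sub_mul_p'_of_neg β hxy, Real.sign_of_neg hxy]
    ring
  rw [← intervalIntegral.integral_Iic_add_Ioi hint.integrableOn hint.integrableOn,
    integral_Iic_eq_integral_Iio, setIntegral_congr_fun measurableSet_Iio hleft,
    setIntegral_congr_fun measurableSet_Ioi hright, integral_const_mul, integral_const_mul,
    ← integral_Iic_eq_integral_Iio, integral_Iic_exp_sub_mul_add hg hgi hg'i,
    integral_Ioi_exp_sub_mul_sub hg hgi hg'i]
  ring

/-- `b` times the gap is `((1 + ε) (δU - bV)² + (1 - ε) (δU + bV)²) / 2`. -/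
lemma mul_sq_add_mul_le_of_sq_eq {a b δ ε U V : ℝ} (hb : 0 < b) (hδ : δ ^ 2 = (a - δ) * b)
    (hε : |ε| ≤ 1) : δ * (U ^ 2 + ε * (2 * U * V)) ≤ a * U ^ 2 + b * V ^ 2 := by
  obtain ⟨hε₁, hε₂⟩ := abs_le.1 hε
  have h₁ : 0 ≤ (1 + ε) * (δ * U - b * V) ^ 2 := mul_nonneg (by linarith) (sq_nonneg _)
  have h₂ : 0 ≤ (1 - ε) * (δ * U + b * V) ^ 2 := mul_nonneg (by linarith) (sq_nonneg _)
  refine le_of_mul_le_mul_left ?_ hb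
  nlinarith

lemma sq_eq_of_eq_sqrt_mul_sqrt_sub_sqrt {γ δ : ℝ} (hγ0 : 0 ≤ γ) (hγ4 : γ ≤ 4)
    (hδ : δ = √γ / 4 * (√(12 - 3 * γ) - √γ)) : δ ^ 2 = ((3 - γ) / 2 - δ) * (γ / 2) := by
  have h₁ : √γ ^ 2 = γ := sq_sqrt hγ0
  have h₂ : √(12 - 3 * γ) ^ 2 = 12 - 3 * γ := sq_sqrt (by linarith)
  subst hδ
  linear_combination ((√(12 - 3 * γ) - √γ) ^ 2 - γ) / 16 * h₁ + γ / 16 * h₂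

theorem kernel_minus_inequality
    (γ β : ℝ) (hγ0 : 0 < γ) (hγ4 : γ ≤ 4) (hβ0 : 0 ≤ β) (hβ1 : β ≤ 1)
    (δ : ℝ) (hδ : δ = (Real.sqrt γ / 4) * (Real.sqrt (12 - 3*γ) - Real.sqrt γ))
    (u : ℝ → ℝ) (hu : Differentiable ℝ u)
    (hu2 : MemLp u 2 volume) (hu'2 : MemLp (deriv u) 2 volume) :
    ∀ x : ℝ,
      (∫ y, (p (x - y) - β * p' (x - y)) * ((3 - γ)/2 * u y^2 + (γ/2) * deriv u y^2))
        ≥ δ * u x^2 := by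
  intro x
  have hδsq := sq_eq_of_eq_sqrt_mul_sqrt_sub_sqrt hγ0.le hγ4 hδ
  have hkernel := p_sub_mul_p'_nonneg (abs_le.2 ⟨by linarith, hβ1⟩)
  have hsq : ∀ y, HasDerivAt (fun y => u y ^ 2) (2 * u y * deriv u y) y := fun y => by
    simpa using (hu y).hasDerivAt.fun_pow 2
  have hprod : Integrable fun y => 2 * u y * deriv u y := by
    simpa [mul_assoc] using (hu2.integrable_mul hu'2).const_mul 2
  have hsqi := hu2.integrable_sq
  have hG := integrable_p_sub_mul_p'_mul (hsqi.add (integrable_sign_sub_mul hprod x)) β x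
  have hF := integrable_p_sub_mul_p'_mul
    ((hsqi.const_mul ((3 - γ) / 2)).add (hu'2.integrable_sq.const_mul (γ / 2))) β x
  calc δ * u x ^ 2
      = ∫ y, δ * ((p (x - y) - β * p' (x - y)) *
          (u y ^ 2 + Real.sign (x - y) * (2 * u y * deriv u y))) := by
        rw [integral_const_mul, integral_p_sub_mul_p'_mul_add_sign_mul hsq hsqi hprod]
    _ ≤ _ := integral_mono (hG.const_mul δ) hF fun y => by
        rw [mul_left_comm]
        exact mul_le_mul_of_nonneg_left (mul_sq_add_mul_le_of_sq_eq (by linarith) hδsq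
          (Real.abs_sign_le_one _)) (hkernel _)
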